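/- If p is a random variable on [0,1] with nondecreasing density f, then for the railway masking function g̃(p) = min(p, (p + 1/2) mod 1), it holds that E[h(p) | g̃(p)] ≤ 0 almost surely, where h(p) = 2·1{p < 1/2} − 1. -/
import Mathlib


open MeasureTheory ProbabilityTheory
open scoped ENNReal NNReal

/-- The missing bit `h(p) = 2·1{p < 1/2} − 1`. -/
noncomputable def missingBit (x : ℝ) : ℝ := 2 * (if x < 1/2 then 1 else 0) - 1

/-- The railway masked p-value `g̃(p) = min(p, (p + 1/2) mod 1)`, i.e. `g̃(p) = p` if
`p ≤ 1/2` and `g̃(p) = p − 1/2` otherwise. -/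
noncomputable def railwayMaskedP (x : ℝ) : ℝ := if x ≤ 1/2 then x else x - 1/2

lemma missingBit_measurable : Measurable missingBit := by
  unfold missingBit
  exact ((measurable_const.mul
    (Measurable.ite (measurableSet_lt measurable_id measurable_const)
      measurable_const measurable_const)).sub measurable_const)

lemma railwayMaskedP_measurable : Measurable railwayMaskedP := by
  unfold railwayMaskedP
  exact Measurable.ite (measurableSet_le measurable_id measurable_const)
    measurable_id (measurable_id.sub measurable_const)

lemma missingBit_le_one (x : ℝ) : missingBit x ≤ 1 := by
  unfold missingBit; split <;> norm_num

lemma norm_missingBit_le_one (x : ℝ) : ‖missingBit x‖ ≤ 1 := by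
  unfold missingBit; split <;> norm_num

lemma missingBit_of_gt {x : ℝ} (hx : 1/2 < x) : missingBit x = -1 := by
  unfold missingBit
  rw [if_neg (by linarith)]; ring

/-- Key computation: for any measurable `B`, the integral of `f · missingBit` over
`railwayMaskedP ⁻¹' B ∩ [0,1]` is nonpositive. -/
lemma key_integral (f : ℝ → ℝ) (hf_meas : Measurable f) (hf_nonneg : ∀ x, 0 ≤ f x)
    (hfint : IntegrableOn f (Set.Icc (0:ℝ) 1))
    (hmono : ∀ a ∈ Set.Icc (0:ℝ) (1/2), f a ≤ f (a + 1/2))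
    (B : Set ℝ) (hB : MeasurableSet B) :
    ∫ x in railwayMaskedP ⁻¹' B ∩ Set.Icc 0 1, f x * missingBit x ≤ 0 := by
  set g : ℝ → ℝ := fun x => f x * missingBit x with hg
  set S1 : Set ℝ := B ∩ Set.Icc 0 (1/2) with hS1
  set C' : Set ℝ := B ∩ Set.Ioc 0 (1/2) with hC'
  set S2 : Set ℝ := (fun x : ℝ => x - 1/2) ⁻¹' C' with hS2
  have hS1meas : MeasurableSet S1 := hB.inter measurableSet_Icc
  have hC'meas : MeasurableSet C' := hB.inter measurableSet_Ioc
  have hS2meas : MeasurableSet S2 :=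
    hC'meas.preimage (measurable_id.sub measurable_const)
  -- decompose the set
  have hsplit : railwayMaskedP ⁻¹' B ∩ Set.Icc 0 1 = S1 ∪ S2 := by
    ext x
    by_cases hx : x ≤ 1/2
    · simp only [Set.mem_inter_iff, Set.mem_union, Set.mem_preimage, Set.mem_Icc, Set.mem_Ioc,
        hS1, hS2, hC', railwayMaskedP, if_pos hx]
      constructor
      · rintro ⟨hxB, h0, h1⟩; exact Or.inl ⟨hxB, ⟨h0, hx⟩⟩
      · rintro (⟨hxB, h0, h2⟩ | ⟨_, h0, _⟩)
        · exact ⟨hxB, h0, by linarith⟩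
        · linarith
    · push_neg at hx
      simp only [Set.mem_inter_iff, Set.mem_union, Set.mem_preimage, Set.mem_Icc, Set.mem_Ioc,
        hS1, hS2, hC', railwayMaskedP, if_neg (not_le.mpr hx)]
      constructor
      · rintro ⟨hxB, _, h1⟩; exact Or.inr ⟨hxB, by linarith, by linarith⟩
      · rintro (⟨_, _, h2⟩ | ⟨hxB, h0, h2⟩)
        · linarith
        · exact ⟨hxB, by linarith, by linarith⟩
  have hS1sub : S1 ⊆ Set.Icc 0 1 := fun x hx =>
    ⟨hx.2.1, by have := hx.2.2; linarith⟩
  have hS2sub : S2 ⊆ Set.Icc 0 1 := fun x hx =>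
    ⟨by have := hx.2.1; linarith, by have := hx.2.2; linarith⟩
  have hdisj : Disjoint S1 S2 := by
    rw [Set.disjoint_left]
    intro x hx1 hx2
    have h1 : x ≤ 1/2 := hx1.2.2
    have h2 : (0:ℝ) < x - 1/2 := hx2.2.1
    linarith
  -- integrability
  have hgmeas : Measurable g := hf_meas.mul missingBit_measurable
  have hgint : IntegrableOn g (Set.Icc 0 1) := by
    refine Integrable.mono hfint hgmeas.aestronglyMeasurable ?_
    filter_upwards with x
    rw [hg]
    simp only [norm_mul]
    calc ‖f x‖ * ‖missingBit x‖ ≤ ‖f x‖ * 1 :=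
          mul_le_mul_of_nonneg_left (norm_missingBit_le_one x) (norm_nonneg _)
      _ = ‖f x‖ := mul_one _
  have hgS1 : IntegrableOn g S1 := hgint.mono_set hS1sub
  have hgS2 : IntegrableOn g S2 := hgint.mono_set hS2sub
  have hfS1 : IntegrableOn f S1 := hfint.mono_set hS1sub
  -- integrability of the shifted density on Icc 0 (1/2)
  have hshift : IntegrableOn (fun a => f (a + 1/2)) (Set.Icc (0:ℝ) (1/2)) := by
    have h1 : IntegrableOn f (Set.Icc (1/2 : ℝ) 1) :=
      hfint.mono_set (Set.Icc_subset_Icc (by norm_num) le_rfl)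
    have h2 : Integrable ((Set.Icc (1/2:ℝ) 1).indicator f) := by
      rwa [integrable_indicator_iff measurableSet_Icc]
    have h3 := h2.comp_add_right (1/2)
    have h4 : (fun a => (Set.Icc (1/2:ℝ) 1).indicator f (a + 1/2))
        = (Set.Icc (0:ℝ) (1/2)).indicator (fun a => f (a + 1/2)) := by
      funext a
      by_cases h : a ∈ Set.Icc (0:ℝ) (1/2)
      · have h' : a + 1/2 ∈ Set.Icc (1/2:ℝ) 1 := ⟨by have := h.1; linarith, by have := h.2; linarith⟩
        rw [Set.indicator_of_mem h', Set.indicator_of_mem h]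
      · have h' : a + 1/2 ∉ Set.Icc (1/2:ℝ) 1 := by
          intro hc
          exact h ⟨by have := hc.1; linarith, by have := hc.2; linarith⟩
        rw [Set.indicator_of_notMem h', Set.indicator_of_notMem h]
    rw [h4] at h3
    rwa [integrable_indicator_iff measurableSet_Icc] at h3
  have hshiftS1 : IntegrableOn (fun a => f (a + 1/2)) S1 :=
    hshift.mono_set (Set.inter_subset_right)
  -- integral over the union
  rw [hsplit, setIntegral_union hdisj hS2meas hgS1 hgS2]
  -- second piece: g = -f on S2, and change variables
  have hterm2 : ∫ x in S2, g x = - ∫ a in C', f (a + 1/2) := by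
    have heq : ∀ x ∈ S2, g x = - f x := by
      intro x hx
      have hgt : 1/2 < x := by have := hx.2.1; linarith
      rw [hg]; simp only
      rw [missingBit_of_gt hgt]; ring
    rw [setIntegral_congr_fun hS2meas heq, integral_neg, neg_inj]
    rw [← integral_indicator hS2meas, ← integral_indicator hC'meas]
    have hptwise : ∀ x : ℝ, S2.indicator f x
        = C'.indicator (fun a => f (a + 1/2)) (x + -(1/2)) := by
      intro x
      have hxeq : x + -(1/2 : ℝ) = x - 1/2 := by ring
      rw [hxeq]
      by_cases h : x - 1/2 ∈ C'
      · have hx2 : x ∈ S2 := h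
        rw [Set.indicator_of_mem hx2, Set.indicator_of_mem h]
        show f x = f (x - 1/2 + 1/2)
        congr 1; ring
      · have hx2 : x ∉ S2 := h
        rw [Set.indicator_of_notMem hx2, Set.indicator_of_notMem h]
    simp_rw [hptwise]
    exact integral_add_right_eq_self (C'.indicator (fun a => f (a + 1/2))) (-(1/2))
  -- first piece bounded by ∫_{S1} f
  have hterm1 : ∫ x in S1, g x ≤ ∫ x in S1, f x := by
    refine setIntegral_mono_on hgS1 hfS1 hS1meas ?_
    intro x _
    rw [hg]; simp only
    calc f x * missingBit x ≤ f x * 1 :=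
          mul_le_mul_of_nonneg_left (missingBit_le_one x) (hf_nonneg x)
      _ = f x := mul_one _
  -- shift comparison
  have hcmp : ∫ x in S1, f x ≤ ∫ a in S1, f (a + 1/2) := by
    refine setIntegral_mono_on hfS1 hshiftS1 hS1meas ?_
    intro x hx
    exact hmono x hx.2
  -- C' =ᵐ S1
  have haeeq : (C' : Set ℝ) =ᵐ[volume] S1 :=
    Filter.EventuallyEq.inter (Filter.EventuallyEq.refl _ _) Ioc_ae_eq_Icc
  have hCS : ∫ a in C', f (a + 1/2) = ∫ a in S1, f (a + 1/2) :=
    setIntegral_congr_set haeeq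
  rw [hterm2, hCS]
  linarith

/-- Abstract step: if all set integrals of `F` over `m`-measurable sets are nonpositive,
then the conditional expectation of `F` w.r.t. `m` is a.s. nonpositive. -/
lemma condexp_nonpos_of_forall_setIntegral_nonpos {Ω : Type*} {mΩ : MeasurableSpace Ω}
    (P : Measure Ω) [IsProbabilityMeasure P] (F : Ω → ℝ) (hF : Integrable F P)
    (m : MeasurableSpace Ω) (hm : m ≤ mΩ)
    (key : ∀ s : Set Ω, MeasurableSet[m] s → ∫ ω in s, F ω ∂P ≤ 0) :
    ∀ᵐ ω ∂P, (P[F | m]) ω ≤ 0 := by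
  have hcondint : Integrable (P[F | m]) (P.trim hm) :=
    integrable_condExp.trim hm stronglyMeasurable_condExp
  have htrim : 0 ≤ᵐ[P.trim hm] fun ω => -(P[F | m]) ω := by
    refine ae_nonneg_of_forall_setIntegral_nonneg hcondint.neg ?_
    intro s hs _
    rw [integral_neg, neg_nonneg, ← setIntegral_trim hm stronglyMeasurable_condExp hs,
      setIntegral_condExp hm hF hs]
    exact key s hs
  have h := ae_of_ae_trim hm htrim
  filter_upwards [h] with ω hω
  simpa using hω

/-- If `p` has a density `f` on `[0,1]` that is nondecreasing in the sense
`f(a) ≤ f(a + 1/2)` for `a ∈ [0,1/2]`, then `E[h(p) | g̃(p)] ≤ 0` almost surely. -/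
theorem condExp_missingBit_nonpos_railway {Ω : Type*} [MeasurableSpace Ω]
    (P : Measure Ω) [IsProbabilityMeasure P] (p : Ω → ℝ) (hpmeas : Measurable p)
    (f : ℝ → ℝ) (hf_meas : Measurable f) (hf_nonneg : ∀ x, 0 ≤ f x)
    (hp : Measure.map p P
      = (volume.restrict (Set.Icc (0:ℝ) 1)).withDensity (fun x => ENNReal.ofReal (f x)))
    (hmono : ∀ a ∈ Set.Icc (0:ℝ) (1/2), f a ≤ f (a + 1/2)) :
    ∀ᵐ ω ∂P,
      (P[(fun ω' => missingBit (p ω')) |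
          MeasurableSpace.comap (fun ω' => railwayMaskedP (p ω')) inferInstance]) ω ≤ 0 := by
  have hgp : Measurable (fun ω' => railwayMaskedP (p ω')) :=
    railwayMaskedP_measurable.comp hpmeas
  have hm : MeasurableSpace.comap (fun ω' => railwayMaskedP (p ω')) inferInstance
      ≤ ‹MeasurableSpace Ω› := hgp.comap_le
  have hint : Integrable (fun ω => missingBit (p ω)) P := by
    refine Integrable.mono' (integrable_const (1:ℝ))
      (missingBit_measurable.comp hpmeas).aestronglyMeasurable ?_
    filter_upwards with ω
    exact norm_missingBit_le_one _
  -- f is integrable on [0,1]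
  have hfint : IntegrableOn f (Set.Icc (0:ℝ) 1) := by
    have huniv : (Measure.map p P) Set.univ = 1 := by
      rw [Measure.map_apply hpmeas MeasurableSet.univ]
      simp
    rw [hp, withDensity_apply _ MeasurableSet.univ, Measure.restrict_univ] at huniv
    refine ⟨hf_meas.aestronglyMeasurable, ?_⟩
    rw [hasFiniteIntegral_iff_ofReal (Filter.Eventually.of_forall fun x => hf_nonneg x)]
    rw [huniv]
    exact ENNReal.one_lt_top
  refine condexp_nonpos_of_forall_setIntegral_nonpos P _ hint _ hm ?_
  rintro s ⟨B, hB, rfl⟩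
  have hpre : (fun ω' => railwayMaskedP (p ω')) ⁻¹' B
      = p ⁻¹' (railwayMaskedP ⁻¹' B) := rfl
  rw [hpre,
    ← setIntegral_map (railwayMaskedP_measurable hB)
      (missingBit_measurable.aestronglyMeasurable) hpmeas.aemeasurable, hp]
  have hofReal : (fun x => ENNReal.ofReal (f x))
      = fun x => ((fun x => (f x).toNNReal) x : ℝ≥0∞) := rfl
  have htoNN : Measurable (fun x => (f x).toNNReal) := measurable_real_toNNReal.comp hf_meas
  rw [hofReal, setIntegral_withDensity_eq_setIntegral_smul
    htoNN _ (railwayMaskedP_measurable hB),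
    Measure.restrict_restrict (railwayMaskedP_measurable hB)]
  have hsmul : ∀ x : ℝ, (f x).toNNReal • missingBit x = f x * missingBit x := by
    intro x
    rw [NNReal.smul_def, smul_eq_mul, Real.coe_toNNReal _ (hf_nonneg x)]
  simp_rw [hsmul]
  exact key_integral f hf_meas hf_nonneg hfint hmono B hB
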